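/- arXiv:1001.2793 — 3 statements merged into one kernel-verified Lean document; each statement's English description precedes it below -/
import Mathlib

section
/- Let T be a standard Borel space, ν a finite Borel measure on T, G a countable group acting on T by Borel bijections with orbit equivalence relation R, ν quasi-invariant with Radon–Nikodym cocycle δ, and S a finite symmetric generating set of G. Suppose R is hyperfinite: there is an increasing sequence (Q_n) of Borel subrelations of R, each of whose classes is finite, such that for ν-almost every x ∈ T one has ⋃_n Q_n[x] = R[x]. Then for ν-almost every x ∈ T, liminf_{n→∞} |∂Q_n[x]|_x / |Q_n[x]|_x = 0; in particular ν-almost every class of R is δ-Følner, i.e., it contains finite subsets A_n with |∂A_n|_x / |A_n|_x → 0. (This is Proposition 4.2 of the paper: an amenable, equivalently hyperfinite, discrete measured equivalence relation has δ-Følner classes almost everywhere.) -/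
/-!
Mass transport along the orbits. Let every `x` send the mass `δ(y,x) / |Q[x]|ₓ` to each point
`y ∈ ∂Q[x]`, so that it sends out `|∂Q[x]|ₓ / |Q[x]|ₓ` in total. By quasi-invariance, the integral
of the mass sent equals the integral of the mass received weighted by `δ(x,y)`, and since
`|Q[x]|ₓ = δ(y,x) |Q[y]|_y` by the cocycle identity, a point receives exactly `1` if it lies on the
boundary of its own class and `0` otherwise. Hence `∫ |∂Qₙ[x]|ₓ / |Qₙ[x]|ₓ dν` is the measure of
the set of such points, which decreases to a null set because `S` is finite and the `Qₙ` exhaust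
the orbits. So the ratios tend to `0` in `L¹`, hence almost everywhere along a subsequence.
-/

open MeasureTheory MulAction Set Filter

/-- The boundary of a set `A` with respect to a finite symmetric set `S` of group
elements: the points of `A` moved outside of `A` by some element of `S`. -/
def smulBoundary {G T : Type*} [SMul G T] (S : Finset G) (A : Set T) : Set T :=
  {y ∈ A | ∃ s ∈ S, s • y ∉ A}

/-- The `δ`-mass `|A|ₓ = Σ_{y ∈ A} δ(y,x)` of a (finite) set `A` relative to `x`. -/
noncomputable def deltaMass {T : Type*} (δ : T → T → ℝ) (A : Set T) (x : T) : ℝ :=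
  ∑ᶠ y ∈ A, δ y x

open scoped ENNReal Topology
open Function

theorem exists_strictMono_ae_tendsto_zero_of_tendsto_lintegral {α : Type*} [MeasurableSpace α]
    {μ : Measure α} {u : ℕ → α → ℝ} (hu : ∀ n, AEStronglyMeasurable (u n) μ)
    (hnonneg : ∀ n x, 0 ≤ u n x)
    (h : Tendsto (fun n => ∫⁻ x, ENNReal.ofReal (u n x) ∂μ) atTop (𝓝 0)) :
    ∃ φ : ℕ → ℕ, StrictMono φ ∧ ∀ᵐ x ∂μ, Tendsto (fun k => u (φ k) x) atTop (𝓝 0) := by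
  have hL1 : Tendsto (fun n => eLpNorm (u n - 0) 1 μ) atTop (𝓝 0) := by
    simpa only [sub_zero, eLpNorm_one_eq_lintegral_enorm, Real.enorm_of_nonneg (hnonneg _ _)]
      using h
  exact (tendstoInMeasure_of_tendsto_eLpNorm one_ne_zero hu aestronglyMeasurable_const
    hL1).exists_seq_tendsto_ae

theorem liminf_eq_zero_of_tendsto_comp {u : ℕ → ℝ} (hu : ∀ n, 0 ≤ u n) {φ : ℕ → ℕ}
    (hφ : StrictMono φ) (h : Tendsto (u ∘ φ) atTop (𝓝 0)) : liminf u atTop = 0 := by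
  have hfreq : ∀ ε > 0, ∃ᶠ n in atTop, u n ≤ ε := fun ε hε =>
    hφ.tendsto_atTop.frequently (h.eventually (ge_mem_nhds hε)).frequently
  refine le_antisymm (le_of_forall_gt_imp_ge_of_dense fun ε hε => ?_) ?_
  · exact liminf_le_of_frequently_le (hfreq ε hε) (isBoundedUnder_of ⟨0, hu⟩)
  · exact le_liminf_of_le (IsCobounded.of_frequently_le (hfreq 1 one_pos))
      (Eventually.of_forall hu)

section LeastRank

variable {G T : Type*} [Group G] [MulAction G T]

/-- For injective `r`, the maps `x ↦ g • x` restricted to `{x | IsLeastRankSMul r g x}` have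
disjoint graphs covering the orbit relation even when the action is not free; this turns sums
over an orbit into sums over `G`. -/
def IsLeastRankSMul (r : G → ℕ) (g : G) (x : T) : Prop :=
  ∀ h : G, r h < r g → h • x ≠ g • x

theorem exists_isLeastRankSMul (r : G → ℕ) {x y : T} (hy : y ∈ orbit G x) :
    ∃ g, IsLeastRankSMul r g x ∧ g • x = y := by
  classical
  have hex : ∃ n, ∃ g : G, r g = n ∧ g • x = y := by
    obtain ⟨g, hg⟩ := hy
    exact ⟨r g, g, rfl, hg⟩
  obtain ⟨g, hgn, hgy⟩ := Nat.find_spec hex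
  exact ⟨g, fun h hlt hh => Nat.find_min hex (hgn ▸ hlt) ⟨h, rfl, hh.trans hgy⟩, hgy⟩

variable {r : G → ℕ}

theorem IsLeastRankSMul.eq (hr : Injective r) {g g' : G} {x : T}
    (hg : IsLeastRankSMul r g x) (hg' : IsLeastRankSMul r g' x) (h : g • x = g' • x) :
    g = g' := by
  rcases lt_trichotomy (r g) (r g') with hlt | heq | hgt
  · exact absurd h (hg' g hlt)
  · exact hr heq
  · exact absurd h.symm (hg g' hgt)

theorem tsum_eq_tsum_isLeastRankSMul_smul (hr : Injective r) (x : T) {f : T → ℝ≥0∞}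
    (hf : support f ⊆ orbit G x) :
    ∑' y, f y = ∑' g, {g : G | IsLeastRankSMul r g x}.indicator (fun g => f (g • x)) g := by
  have hinj : Injective fun g : {g : G | IsLeastRankSMul r g x} => (g : G) • x :=
    fun g g' h => Subtype.ext (g.2.eq hr g'.2 h)
  have hrange : support f ⊆ range fun g : {g : G | IsLeastRankSMul r g x} => (g : G) • x := by
    intro y hy
    obtain ⟨g, hg, rfl⟩ := exists_isLeastRankSMul r (hf hy)
    exact ⟨⟨g, hg⟩, rfl⟩
  rw [← hinj.tsum_eq hrange]
  exact tsum_subtype _ fun g => f (g • x)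

theorem tsum_eq_tsum_isLeastRankSMul_inv_smul (hr : Injective r) (y : T) {f : T → ℝ≥0∞}
    (hf : support f ⊆ orbit G y) :
    ∑' x, f x =
      ∑' g, {g : G | IsLeastRankSMul r g (g⁻¹ • y)}.indicator (fun g => f (g⁻¹ • y)) g := by
  have hinj : Injective fun g : {g : G | IsLeastRankSMul r g (g⁻¹ • y)} => (g : G)⁻¹ • y := by
    intro g g' h
    have h : (g : G)⁻¹ • y = (g' : G)⁻¹ • y := h
    have hg' : IsLeastRankSMul r (g' : G) ((g : G)⁻¹ • y) := h ▸ g'.2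
    refine Subtype.ext (g.2.eq hr hg' ?_)
    rw [smul_inv_smul, h, smul_inv_smul]
  have hrange : support f ⊆
      range fun g : {g : G | IsLeastRankSMul r g (g⁻¹ • y)} => (g : G)⁻¹ • y := by
    intro x hx
    obtain ⟨g, hg, hgx⟩ := exists_isLeastRankSMul r (mem_orbit_symm.1 (hf hx))
    have hx : g⁻¹ • y = x := inv_smul_eq_iff.2 hgx.symm
    exact ⟨⟨g, by rwa [mem_ofPred_eq, hx]⟩, hx⟩
  rw [← hinj.tsum_eq hrange]
  exact tsum_subtype _ fun g => f (g⁻¹ • y)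

end LeastRank

section MassTransport

variable {G T : Type*} [Group G] [MulAction G T] [MeasurableSpace T]

theorem measurableSet_isLeastRankSMul [Countable G] [MeasurableEq T]
    (hact : ∀ g : G, Measurable fun x : T => g • x) (r : G → ℕ) (g : G) :
    MeasurableSet {x : T | IsLeastRankSMul r g x} := by
  simp only [IsLeastRankSMul, ofPred_forall]
  exact .iInter fun h => .iInter fun _ => (measurableSet_eq_fun (hact h) (hact g)).compl

theorem lintegral_eq_lintegral_smul_mul (hact : ∀ g : G, Measurable fun x : T => g • x)
    {ν : Measure T} {δ : T → T → ℝ} (hδmeas : Measurable fun p : T × T => δ p.1 p.2) {g : G}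
    (hg : ∀ B : Set T, MeasurableSet B →
      ν ((fun x => g • x) '' B) = ∫⁻ x in B, ENNReal.ofReal (δ (g • x) x) ∂ν)
    {H : T → ℝ≥0∞} (hH : Measurable H) :
    ∫⁻ x, H x ∂ν = ∫⁻ y, H (g • y) * ENNReal.ofReal (δ (g • y) y) ∂ν := by
  have hdens : Measurable fun y : T => ENNReal.ofReal (δ (g • y) y) :=
    (hδmeas.comp ((hact g).prodMk measurable_id)).ennreal_ofReal
  have hmap : ν.map (fun x => g⁻¹ • x) = ν.withDensity fun y => ENNReal.ofReal (δ (g • y) y) := by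
    ext B hB
    rw [Measure.map_apply (hact g⁻¹) hB, withDensity_apply _ hB, ← hg B hB]
    congr 1
    ext x
    exact ⟨fun hx => ⟨g⁻¹ • x, hx, smul_inv_smul g x⟩, by rintro ⟨y, hy, rfl⟩; simpa⟩
  calc ∫⁻ x, H x ∂ν = ∫⁻ x, H (g • g⁻¹ • x) ∂ν := by simp only [smul_inv_smul]
    _ = ∫⁻ y, H (g • y) ∂ν.map (fun x => g⁻¹ • x) :=
      (lintegral_map (hH.comp (hact g)) (hact g⁻¹)).symm
    _ = ∫⁻ y, H (g • y) * ENNReal.ofReal (δ (g • y) y) ∂ν := by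
      rw [hmap]
      exact (lintegral_withDensity_eq_lintegral_mul _ hdens (hH.comp (hact g))).trans
        (lintegral_congr fun y => mul_comm _ _)

theorem measurable_indicator_isLeastRankSMul [Countable G] [MeasurableEq T]
    (hact : ∀ g : G, Measurable fun x : T => g • x) {F : T → T → ℝ≥0∞}
    (hF : Measurable (uncurry F)) (r : G → ℕ) (g : G) :
    Measurable fun x => {g : G | IsLeastRankSMul r g x}.indicator (fun g => F x (g • x)) g :=
  (hF.comp (measurable_id.prodMk (hact g))).indicator (measurableSet_isLeastRankSMul hact r g)

theorem measurable_tsum_of_support_subset_orbit [Countable G] [MeasurableEq T]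
    (hact : ∀ g : G, Measurable fun x : T => g • x) {F : T → T → ℝ≥0∞}
    (hF : Measurable (uncurry F)) (hsupp : ∀ x, support (F x) ⊆ orbit G x) :
    Measurable fun x => ∑' y, F x y := by
  obtain ⟨r, hr⟩ := Countable.exists_injective_nat G
  simp_rw [fun x => tsum_eq_tsum_isLeastRankSMul_smul hr x (hsupp x)]
  exact .tsum (measurable_indicator_isLeastRankSMul hact hF r)

/-- The mass transport principle. -/
theorem lintegral_tsum_swap_orbit [Countable G] [MeasurableEq T]
    (hact : ∀ g : G, Measurable fun x : T => g • x) {ν : Measure T} {δ : T → T → ℝ}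
    (hδmeas : Measurable fun p : T × T => δ p.1 p.2)
    (hδRN : ∀ g : G, ∀ B : Set T, MeasurableSet B →
      ν ((fun x => g • x) '' B) = ∫⁻ x in B, ENNReal.ofReal (δ (g • x) x) ∂ν)
    {F : T → T → ℝ≥0∞} (hF : Measurable (uncurry F)) (hsupp : ∀ x, support (F x) ⊆ orbit G x) :
    ∫⁻ x, ∑' y, F x y ∂ν = ∫⁻ y, ∑' x, F x y * ENNReal.ofReal (δ x y) ∂ν := by
  obtain ⟨r, hr⟩ := Countable.exists_injective_nat G
  set K : G → T → ℝ≥0∞ := fun g x =>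
    {g : G | IsLeastRankSMul r g x}.indicator (fun g => F x (g • x)) g
  have hK : ∀ g, Measurable (K g) := measurable_indicator_isLeastRankSMul hact hF r
  have hsupp' : ∀ y, support (fun x => F x y * ENNReal.ofReal (δ x y)) ⊆ orbit G y :=
    fun y x hx => mem_orbit_symm.1 (hsupp x (left_ne_zero_of_mul hx))
  calc ∫⁻ x, ∑' y, F x y ∂ν = ∫⁻ x, ∑' g, K g x ∂ν :=
        lintegral_congr fun x => tsum_eq_tsum_isLeastRankSMul_smul hr x (hsupp x)
    _ = ∑' g, ∫⁻ x, K g x ∂ν := lintegral_tsum fun g => (hK g).aemeasurable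
    _ = ∑' g, ∫⁻ y, K g (g⁻¹ • y) * ENNReal.ofReal (δ (g⁻¹ • y) y) ∂ν :=
        tsum_congr fun g => lintegral_eq_lintegral_smul_mul hact hδmeas (hδRN g⁻¹) (hK g)
    _ = ∫⁻ y, ∑' g, K g (g⁻¹ • y) * ENNReal.ofReal (δ (g⁻¹ • y) y) ∂ν :=
        (lintegral_tsum fun g => ((hK g).comp (hact g⁻¹)).mul
          (hδmeas.comp ((hact g⁻¹).prodMk measurable_id)).ennreal_ofReal |>.aemeasurable).symm
    _ = ∫⁻ y, ∑' x, F x y * ENNReal.ofReal (δ x y) ∂ν := by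
        refine lintegral_congr fun y => ?_
        rw [tsum_eq_tsum_isLeastRankSMul_inv_smul hr y (hsupp' y)]
        refine tsum_congr fun g => ?_
        by_cases hg : IsLeastRankSMul r g (g⁻¹ • y) <;>
          simp only [K, indicator, mem_ofPred_eq, hg, ↓reduceIte, smul_inv_smul, zero_mul]

end MassTransport

section FiniteSubrelation

variable {G T : Type*} [Group G] [MulAction G T]

structure IsFiniteSubrelation (G : Type*) [Group G] [MulAction G T] (P : T → T → Prop) :
    Prop where
  equivalence : Equivalence P
  mem_orbit : ∀ x y, P x y → y ∈ orbit G x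
  finite : ∀ x, {y | P x y}.Finite

def classBoundary (S : Finset G) (P : T → T → Prop) : Set T :=
  {y | ∃ s ∈ S, ¬ P y (s • y)}

noncomputable def boundaryRatio (δ : T → T → ℝ) (S : Finset G) (P : T → T → Prop) (x : T) : ℝ :=
  deltaMass δ (smulBoundary S {y | P x y}) x / deltaMass δ {y | P x y} x

variable {δ : T → T → ℝ} {S : Finset G} {P : T → T → Prop}

theorem ofReal_deltaMass {A : Set T} (hA : A.Finite) {x : T} (hδ : ∀ y ∈ A, 0 ≤ δ y x) :
    ENNReal.ofReal (deltaMass δ A x) = ∑' y, A.indicator (fun y => ENNReal.ofReal (δ y x)) y := by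
  rw [deltaMass, finsum_mem_eq_finite_toFinset_sum _ hA,
    ENNReal.ofReal_sum_of_nonneg fun y hy => hδ y (hA.mem_toFinset.1 hy),
    tsum_eq_sum (s := hA.toFinset) fun y hy => indicator_of_notMem (by simpa using hy) _]
  exact Finset.sum_congr rfl fun y hy =>
    (indicator_of_mem (hA.mem_toFinset.1 hy) fun y => ENNReal.ofReal (δ y x)).symm

theorem deltaMass_nonneg {A : Set T} {x : T} (hδ : ∀ y ∈ A, 0 ≤ δ y x) : 0 ≤ deltaMass δ A x :=
  finsum_nonneg fun y => finsum_nonneg fun hy => hδ y hy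

theorem boundaryRatio_nonneg (hδ : ∀ x y, 0 ≤ δ x y) (x : T) :
    0 ≤ boundaryRatio δ S P x :=
  div_nonneg (deltaMass_nonneg fun y _ => hδ y x) (deltaMass_nonneg fun y _ => hδ y x)

theorem deltaMass_pos {A : Set T} (hA : A.Finite) {x : T} (hxA : x ∈ A)
    (hδ : ∀ y ∈ A, 0 < δ y x) : 0 < deltaMass δ A x := by
  rw [deltaMass, finsum_mem_eq_finite_toFinset_sum _ hA]
  exact Finset.sum_pos (fun y hy => hδ y (hA.mem_toFinset.1 hy)) ⟨x, hA.mem_toFinset.2 hxA⟩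

theorem deltaMass_eq_deltaMass_mul
    (hδcocycle : ∀ x y z : T, y ∈ orbit G x → z ∈ orbit G x → δ x z = δ x y * δ y z)
    {A : Set T} {x y : T} (hx : ∀ z ∈ A, x ∈ orbit G z) (hy : ∀ z ∈ A, y ∈ orbit G z) :
    deltaMass δ A x = deltaMass δ A y * δ y x := by
  rw [deltaMass, deltaMass, finsum_mem_mul]
  exact finsum_mem_congr rfl fun z hz => hδcocycle z y x (hy z hz) (hx z hz)

theorem IsFiniteSubrelation.deltaMass_eq_mul (hP : IsFiniteSubrelation G P)
    (hδcocycle : ∀ x y z : T, y ∈ orbit G x → z ∈ orbit G x → δ x z = δ x y * δ y z)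
    {x y : T} (hxy : P x y) :
    deltaMass δ {z | P x z} x = deltaMass δ {z | P y z} y * δ y x := by
  have hclass : {z | P x z} = {z | P y z} :=
    ext fun z => ⟨hP.equivalence.trans (hP.equivalence.symm hxy), hP.equivalence.trans hxy⟩
  rw [hclass]
  refine deltaMass_eq_deltaMass_mul hδcocycle (fun z hz => ?_) (fun z hz => ?_)
  · exact mem_orbit_symm.1 (hP.mem_orbit x z (hP.equivalence.trans hxy hz))
  · exact mem_orbit_symm.1 (hP.mem_orbit y z hz)

theorem IsFiniteSubrelation.mem_smulBoundary_iff (hP : IsFiniteSubrelation G P) {x y : T}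
    (hxy : P x y) :
    y ∈ smulBoundary S {z | P x z} ↔ y ∈ classBoundary S P := by
  simp only [smulBoundary, classBoundary, mem_ofPred_eq, hxy, true_and]
  exact exists_congr fun s => and_congr_right fun _ => not_congr
    ⟨hP.equivalence.trans (hP.equivalence.symm hxy), hP.equivalence.trans hxy⟩

theorem IsFiniteSubrelation.finite_smulBoundary (hP : IsFiniteSubrelation G P) (x : T) :
    (smulBoundary S {z | P x z}).Finite :=
  (hP.finite x).subset fun _ hy => hy.1

theorem IsFiniteSubrelation.ofReal_div_deltaMass_mul (hP : IsFiniteSubrelation G P)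
    (hδpos : ∀ x y : T, 0 < δ x y)
    (hδcocycle : ∀ x y z : T, y ∈ orbit G x → z ∈ orbit G x → δ x z = δ x y * δ y z)
    {x y : T} (hxy : P x y) :
    ENNReal.ofReal (δ y x) / ENNReal.ofReal (deltaMass δ {z | P x z} x) * ENNReal.ofReal (δ x y) =
      ENNReal.ofReal (δ x y) / ENNReal.ofReal (deltaMass δ {z | P y z} y) := by
  set a := ENNReal.ofReal (δ y x)
  set m := ENNReal.ofReal (deltaMass δ {z | P y z} y)
  have ha : a ≠ 0 := (ENNReal.ofReal_pos.2 (hδpos y x)).ne'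
  have hmx : ENNReal.ofReal (deltaMass δ {z | P x z} x) = m * a := by
    rw [hP.deltaMass_eq_mul hδcocycle hxy,
      ENNReal.ofReal_mul (deltaMass_nonneg fun z _ => (hδpos z y).le)]
  calc a / ENNReal.ofReal (deltaMass δ {z | P x z} x) * ENNReal.ofReal (δ x y)
      = 1 * a / (m * a) * ENNReal.ofReal (δ x y) := by rw [one_mul, hmx]
    _ = ENNReal.ofReal (δ x y) / m := by
      rw [ENNReal.mul_div_mul_right _ _ ha ENNReal.ofReal_ne_top, one_div, ENNReal.div_eq_inv_mul]

theorem IsFiniteSubrelation.tsum_boundary_weight_eq_indicator (hP : IsFiniteSubrelation G P)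
    (hδpos : ∀ x y : T, 0 < δ x y)
    (hδcocycle : ∀ x y z : T, y ∈ orbit G x → z ∈ orbit G x → δ x z = δ x y * δ y z) (y : T) :
    ∑' x, (smulBoundary S {z | P x z}).indicator (fun y => ENNReal.ofReal (δ y x)) y /
        ENNReal.ofReal (deltaMass δ {z | P x z} x) * ENNReal.ofReal (δ x y) =
      (classBoundary S P).indicator 1 y := by
  set m : T → ℝ≥0∞ := fun x => ENNReal.ofReal (deltaMass δ {z | P x z} x)
  have hm : m y ≠ 0 := (ENNReal.ofReal_pos.2 (deltaMass_pos (hP.finite y)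
    (hP.equivalence.refl y) fun z _ => hδpos z y)).ne'
  have hterm : ∀ x, (smulBoundary S {z | P x z}).indicator (fun y => ENNReal.ofReal (δ y x)) y /
      m x * ENNReal.ofReal (δ x y) = (classBoundary S P).indicator 1 y *
        ({z | P y z}.indicator (fun x => ENNReal.ofReal (δ x y)) x / m y) := by
    intro x
    by_cases hxy : P x y
    · rw [indicator_of_mem (show x ∈ {z | P y z} from hP.equivalence.symm hxy)]
      by_cases hy : y ∈ classBoundary S P
      · rw [indicator_of_mem ((hP.mem_smulBoundary_iff hxy).2 hy), indicator_of_mem hy,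
          Pi.one_apply, one_mul, hP.ofReal_div_deltaMass_mul hδpos hδcocycle hxy]
      · rw [indicator_of_notMem (mt (hP.mem_smulBoundary_iff hxy).1 hy), indicator_of_notMem hy,
          ENNReal.zero_div, zero_mul, zero_mul]
    · rw [indicator_of_notMem (fun h => hxy h.1),
        indicator_of_notMem (show x ∉ {z | P y z} from mt hP.equivalence.symm hxy),
        ENNReal.zero_div, zero_mul, ENNReal.zero_div, mul_zero]
  rw [tsum_congr hterm, ENNReal.tsum_mul_left]
  simp_rw [div_eq_mul_inv]
  rw [ENNReal.tsum_mul_right, ← ofReal_deltaMass (hP.finite y) fun z _ => (hδpos z y).le,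
    ← div_eq_mul_inv, ENNReal.div_self hm ENNReal.ofReal_ne_top, mul_one]

end FiniteSubrelation

section BoundaryRatio

variable {G T : Type*} [Group G] [MulAction G T] [MeasurableSpace T] {δ : T → T → ℝ}
  {S : Finset G} {P : T → T → Prop}

theorem measurable_ofReal_deltaMass [Countable G] [MeasurableEq T]
    (hact : ∀ g : G, Measurable fun x : T => g • x)
    (hδmeas : Measurable fun p : T × T => δ p.1 p.2) (hδ : ∀ x y, 0 ≤ δ x y) {A : T → Set T}
    (hA : MeasurableSet {p : T × T | p.2 ∈ A p.1}) (hfin : ∀ x, (A x).Finite)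
    (horb : ∀ x, A x ⊆ orbit G x) :
    Measurable fun x => ENNReal.ofReal (deltaMass δ (A x) x) := by
  simp_rw [fun x => ofReal_deltaMass (hfin x) fun y _ => hδ y x]
  refine measurable_tsum_of_support_subset_orbit hact ?_ fun x => ?_
  · exact (hδmeas.comp measurable_swap).ennreal_ofReal.indicator hA
  · exact support_indicator_subset.trans (horb x)

theorem measurableSet_setOf_mem_smulBoundary (hact : ∀ g : G, Measurable fun x : T => g • x)
    (hPmeas : MeasurableSet {p : T × T | P p.1 p.2}) :
    MeasurableSet {p : T × T | p.2 ∈ smulBoundary S {z | P p.1 z}} := by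
  have hs : ∀ s : G, MeasurableSet {p : T × T | ¬ P p.1 (s • p.2)} := fun s =>
    (hPmeas.preimage (measurable_fst.prodMk ((hact s).comp measurable_snd))).compl
  have hset : {p : T × T | p.2 ∈ smulBoundary S {z | P p.1 z}} =
      {p | P p.1 p.2} ∩ ⋃ s ∈ S, {p : T × T | ¬ P p.1 (s • p.2)} := by
    ext p
    simp [smulBoundary]
  rw [hset]
  exact hPmeas.inter (.biUnion S.countable_toSet fun s _ => hs s)

theorem measurableSet_classBoundary (hact : ∀ g : G, Measurable fun x : T => g • x)
    (hPmeas : MeasurableSet {p : T × T | P p.1 p.2}) :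
    MeasurableSet (classBoundary S P) := by
  have hset : classBoundary S P = ⋃ s ∈ S, (fun y => (y, s • y)) ⁻¹' {p | P p.1 p.2}ᶜ := by
    ext y
    simp [classBoundary]
  rw [hset]
  exact .biUnion S.countable_toSet fun s _ =>
    hPmeas.compl.preimage (measurable_id.prodMk (hact s))

theorem IsFiniteSubrelation.measurable_ofReal_deltaMass_class [Countable G] [MeasurableEq T]
    (hP : IsFiniteSubrelation G P) (hPmeas : MeasurableSet {p : T × T | P p.1 p.2})
    (hact : ∀ g : G, Measurable fun x : T => g • x)
    (hδmeas : Measurable fun p : T × T => δ p.1 p.2) (hδ : ∀ x y, 0 ≤ δ x y) :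
    Measurable fun x => ENNReal.ofReal (deltaMass δ {z | P x z} x) :=
  measurable_ofReal_deltaMass hact hδmeas hδ hPmeas hP.finite hP.mem_orbit

theorem IsFiniteSubrelation.measurable_boundaryRatio [Countable G] [MeasurableEq T]
    (hP : IsFiniteSubrelation G P) (hPmeas : MeasurableSet {p : T × T | P p.1 p.2})
    (hact : ∀ g : G, Measurable fun x : T => g • x)
    (hδmeas : Measurable fun p : T × T => δ p.1 p.2) (hδ : ∀ x y, 0 ≤ δ x y) :
    Measurable (boundaryRatio δ S P) := by
  have hratio : boundaryRatio δ S P = fun x =>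
      (ENNReal.ofReal (deltaMass δ (smulBoundary S {z | P x z}) x)).toReal /
        (ENNReal.ofReal (deltaMass δ {z | P x z} x)).toReal := by
    ext x
    rw [ENNReal.toReal_ofReal (deltaMass_nonneg fun y _ => hδ y x),
      ENNReal.toReal_ofReal (deltaMass_nonneg fun y _ => hδ y x), boundaryRatio]
  have hbdry : Measurable fun x => ENNReal.ofReal (deltaMass δ (smulBoundary S {z | P x z}) x) :=
    measurable_ofReal_deltaMass hact hδmeas hδ (measurableSet_setOf_mem_smulBoundary hact hPmeas)
      hP.finite_smulBoundary fun x y hy => hP.mem_orbit x y hy.1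
  rw [hratio]
  exact hbdry.ennreal_toReal.div
    (hP.measurable_ofReal_deltaMass_class hPmeas hact hδmeas hδ).ennreal_toReal

theorem IsFiniteSubrelation.lintegral_ofReal_boundaryRatio [Countable G] [MeasurableEq T]
    (hP : IsFiniteSubrelation G P) (hPmeas : MeasurableSet {p : T × T | P p.1 p.2})
    (hact : ∀ g : G, Measurable fun x : T => g • x) {ν : Measure T}
    (hδmeas : Measurable fun p : T × T => δ p.1 p.2) (hδpos : ∀ x y : T, 0 < δ x y)
    (hδcocycle : ∀ x y z : T, y ∈ orbit G x → z ∈ orbit G x → δ x z = δ x y * δ y z)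
    (hδRN : ∀ g : G, ∀ B : Set T, MeasurableSet B →
      ν ((fun x => g • x) '' B) = ∫⁻ x in B, ENNReal.ofReal (δ (g • x) x) ∂ν) :
    ∫⁻ x, ENNReal.ofReal (boundaryRatio δ S P x) ∂ν = ν (classBoundary S P) := by
  have hδ : ∀ x y, 0 ≤ δ x y := fun x y => (hδpos x y).le
  set F : T → T → ℝ≥0∞ := fun x y =>
    (smulBoundary S {z | P x z}).indicator (fun y => ENNReal.ofReal (δ y x)) y /
      ENNReal.ofReal (deltaMass δ {z | P x z} x)
  have hleft : ∀ x, ENNReal.ofReal (boundaryRatio δ S P x) = ∑' y, F x y := by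
    intro x
    rw [boundaryRatio, ENNReal.ofReal_div_of_pos (deltaMass_pos (hP.finite x)
        (hP.equivalence.refl x) fun y _ => hδpos y x),
      ofReal_deltaMass (hP.finite_smulBoundary x) fun y _ => hδ y x]
    simp_rw [F, div_eq_mul_inv, ENNReal.tsum_mul_right]
  have hFmeas : Measurable (uncurry F) :=
    ((hδmeas.comp measurable_swap).ennreal_ofReal.indicator
      (measurableSet_setOf_mem_smulBoundary hact hPmeas)).div
      ((hP.measurable_ofReal_deltaMass_class hPmeas hact hδmeas hδ).comp measurable_fst)
  have hFsupp : ∀ x, support (F x) ⊆ orbit G x := by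
    intro x y hy
    by_contra hxy
    have hb : y ∉ smulBoundary S {z | P x z} := fun hb => hxy (hP.mem_orbit x y hb.1)
    exact hy (by simp only [F, indicator_of_notMem hb, ENNReal.zero_div])
  calc ∫⁻ x, ENNReal.ofReal (boundaryRatio δ S P x) ∂ν = ∫⁻ x, ∑' y, F x y ∂ν :=
        lintegral_congr hleft
    _ = ∫⁻ y, ∑' x, F x y * ENNReal.ofReal (δ x y) ∂ν :=
        lintegral_tsum_swap_orbit hact hδmeas hδRN hFmeas hFsupp
    _ = ∫⁻ y, (classBoundary S P).indicator 1 y ∂ν :=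
        lintegral_congr (hP.tsum_boundary_weight_eq_indicator hδpos hδcocycle)
    _ = ν (classBoundary S P) := lintegral_indicator_one (measurableSet_classBoundary hact hPmeas)

end BoundaryRatio

theorem tendsto_measure_classBoundary {G T : Type*} [Group G] [MulAction G T] [MeasurableSpace T]
    (hact : ∀ g : G, Measurable fun x : T => g • x) {ν : Measure T} [IsFiniteMeasure ν]
    {S : Finset G} {Q : ℕ → T → T → Prop} (hQmeas : ∀ n, MeasurableSet {p : T × T | Q n p.1 p.2})
    (hQmono : ∀ n, ∀ x y : T, Q n x y → Q (n + 1) x y)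
    (hQexhaust : ∀ᵐ x ∂ν, ∀ y ∈ orbit G x, ∃ n, Q n x y) :
    Tendsto (fun n => ν (classBoundary S (Q n))) atTop (𝓝 0) := by
  have hmono : Monotone Q := monotone_nat_of_le_succ hQmono
  have hanti : Antitone fun n => classBoundary S (Q n) := fun m n hmn y ⟨s, hs, hns⟩ =>
    ⟨s, hs, fun h => hns (hmono hmn _ _ h)⟩
  have hnull : ν (⋂ n, classBoundary S (Q n)) = 0 := by
    refine measure_mono_null (fun x hx => ?_) (ae_iff.1 hQexhaust)
    intro hexhaust
    have hS : ∀ᶠ n in atTop, ∀ s ∈ S, Q n x (s • x) := (eventually_all_finset S).2 fun s _ =>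
      let ⟨n, hn⟩ := hexhaust (s • x) (mem_orbit x s)
      eventually_atTop.2 ⟨n, fun m hm => hmono hm _ _ hn⟩
    obtain ⟨n, hn⟩ := hS.exists
    obtain ⟨s, hs, hns⟩ := mem_iInter.1 hx n
    exact hns (hn s hs)
  simpa only [hnull, Function.comp_def] using tendsto_measure_iInter_atTop
    (fun n => (measurableSet_classBoundary hact (hQmeas n)).nullMeasurableSet) hanti
    ⟨0, measure_ne_top ν _⟩

theorem hyperfinite_implies_deltaFolner_general
    {T : Type*} [MeasurableSpace T] [StandardBorelSpace T]
    {G : Type*} [Group G] [Countable G] [MulAction G T]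
    (hact : ∀ g : G, Measurable fun x : T => g • x)
    (ν : Measure T) [IsFiniteMeasure ν]
    (δ : T → T → ℝ)
    (hδmeas : Measurable fun p : T × T => δ p.1 p.2)
    (hδpos : ∀ x y : T, 0 < δ x y)
    (hδcocycle : ∀ x y z : T, y ∈ orbit G x → z ∈ orbit G x →
      δ x z = δ x y * δ y z)
    (hδRN : ∀ g : G, ∀ B : Set T, MeasurableSet B →
      ν ((fun x => g • x) '' B) = ∫⁻ x in B, ENNReal.ofReal (δ (g • x) x) ∂ν)
    (S : Finset G)
    (Q : ℕ → T → T → Prop)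
    (hQequiv : ∀ n, Equivalence (Q n))
    (hQmeas : ∀ n, MeasurableSet {p : T × T | Q n p.1 p.2})
    (hQsub : ∀ n, ∀ x y : T, Q n x y → y ∈ orbit G x)
    (hQfin : ∀ n, ∀ x : T, {y | Q n x y}.Finite)
    (hQmono : ∀ n, ∀ x y : T, Q n x y → Q (n + 1) x y)
    (hQexhaust : ∀ᵐ x ∂ν, ∀ y ∈ orbit G x, ∃ n, Q n x y) :
    ∀ᵐ x ∂ν,
      liminf (fun n =>
          deltaMass δ (smulBoundary S {y | Q n x y}) x / deltaMass δ {y | Q n x y} x)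
        atTop = 0 ∧
      ∃ A : ℕ → Set T,
        (∀ n, (A n).Finite ∧ (A n).Nonempty ∧ A n ⊆ orbit G x) ∧
        Tendsto (fun n => deltaMass δ (smulBoundary S (A n)) x / deltaMass δ (A n) x)
          atTop (nhds 0) := by
  have hQ : ∀ n, IsFiniteSubrelation G (Q n) := fun n => ⟨hQequiv n, hQsub n, hQfin n⟩
  have hδ : ∀ x y, 0 ≤ δ x y := fun x y => (hδpos x y).le
  have hint :
      Tendsto (fun n => ∫⁻ x, ENNReal.ofReal (boundaryRatio δ S (Q n) x) ∂ν) atTop (𝓝 0) := by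
    simpa only [(hQ _).lintegral_ofReal_boundaryRatio (hQmeas _) hact hδmeas hδpos hδcocycle hδRN]
      using tendsto_measure_classBoundary hact hQmeas hQmono hQexhaust
  obtain ⟨φ, hφ, hae⟩ := exists_strictMono_ae_tendsto_zero_of_tendsto_lintegral
    (fun n => ((hQ n).measurable_boundaryRatio (hQmeas n) hact hδmeas hδ).aestronglyMeasurable)
    (fun n => boundaryRatio_nonneg hδ) hint
  filter_upwards [hae] with x hx
  refine ⟨liminf_eq_zero_of_tendsto_comp (fun n => boundaryRatio_nonneg hδ x) hφ hx,
    fun k => {y | Q (φ k) x y}, fun k => ?_, hx⟩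
  exact ⟨hQfin _ x, ⟨x, (hQequiv _).refl x⟩, hQsub _ x⟩

/-- **Proposition 4.2: a hyperfinite (equivalently amenable) discrete measured
equivalence relation has `δ`-Følner classes almost everywhere.**
Let `ν` be a finite quasi-invariant measure for the orbit equivalence relation `R` of
a countable group `G` acting on a standard Borel space `T` by Borel bijections, with
Radon–Nikodym cocycle `δ`, and let `S` be a finite symmetric generating set of `G`.
If `R` is hyperfinite, witnessed by an increasing sequence `Q n` of Borel subrelations
with finite classes exhausting `R` almost everywhere, then for `ν`-almost every `x`
the ratios `|∂Q_n[x]|ₓ / |Q_n[x]|ₓ` have lower limit `0`; in particular almost every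
class is `δ`-Følner. -/
theorem hyperfinite_implies_deltaFolner
    {T : Type*} [MeasurableSpace T] [StandardBorelSpace T]
    {G : Type*} [Group G] [Countable G] [MulAction G T]
    (hact : ∀ g : G, Measurable fun x : T => g • x)
    (ν : Measure T) [IsFiniteMeasure ν]
    (δ : T → T → ℝ)
    (hδmeas : Measurable fun p : T × T => δ p.1 p.2)
    (hδpos : ∀ x y : T, 0 < δ x y)
    (hδone : ∀ x : T, δ x x = 1)
    (hδcocycle : ∀ x y z : T, y ∈ orbit G x → z ∈ orbit G x →
      δ x z = δ x y * δ y z)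
    (hδRN : ∀ g : G, ∀ B : Set T, MeasurableSet B →
      ν ((fun x => g • x) '' B) = ∫⁻ x in B, ENNReal.ofReal (δ (g • x) x) ∂ν)
    (S : Finset G) (hSsym : ∀ s ∈ S, s⁻¹ ∈ S)
    (hSgen : Subgroup.closure (S : Set G) = ⊤)
    (Q : ℕ → T → T → Prop)
    (hQequiv : ∀ n, Equivalence (Q n))
    (hQmeas : ∀ n, MeasurableSet {p : T × T | Q n p.1 p.2})
    (hQsub : ∀ n, ∀ x y : T, Q n x y → y ∈ orbit G x)
    (hQfin : ∀ n, ∀ x : T, {y | Q n x y}.Finite)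
    (hQmono : ∀ n, ∀ x y : T, Q n x y → Q (n + 1) x y)
    (hQexhaust : ∀ᵐ x ∂ν, ∀ y ∈ orbit G x, ∃ n, Q n x y) :
    ∀ᵐ x ∂ν,
      liminf (fun n =>
          deltaMass δ (smulBoundary S {y | Q n x y}) x / deltaMass δ {y | Q n x y} x)
        atTop = 0 ∧
      ∃ A : ℕ → Set T,
        (∀ n, (A n).Finite ∧ (A n).Nonempty ∧ A n ⊆ orbit G x) ∧
        Tendsto (fun n => deltaMass δ (smulBoundary S (A n)) x / deltaMass δ (A n) x)
          atTop (nhds 0) :=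
  hyperfinite_implies_deltaFolner_general hact ν δ hδmeas hδpos hδcocycle hδRN S Q hQequiv hQmeas
    hQsub hQfin hQmono hQexhaust
end

section
/- Let T be a standard Borel space, ν a finite Borel measure on T, G a countable group acting on T by Borel bijections with orbit equivalence relation R, ν quasi-invariant with Radon–Nikodym cocycle δ. Let Q be a Borel subrelation of R all of whose classes are finite, and let f : T → [0,∞] be a Borel function. Define f̄(x) = (Σ_{y∈Q[x]} f(y)·δ(y,x)) / (Σ_{y∈Q[x]} δ(y,x)). Then f̄ is constant on each Q-class and ∫_T f̄ dν = ∫_T f dν. (This is the key averaging identity in the proof of Proposition 4.2.) -/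
open MeasureTheory MulAction Set ENNReal

/-- **The averaging identity in the proof of Proposition 4.2** (quasi-invariant case).
Let `ν` be a finite quasi-invariant measure for the orbit equivalence relation of a
countable group `G` acting on a standard Borel space `T` by Borel bijections, with
Radon–Nikodym cocycle `δ`, and let `Q` be a Borel subrelation with finite classes.
For a Borel function `f : T → [0,∞]`, the average
`f̄(x) = (Σ_{y ∈ Q[x]} f(y)·δ(y,x)) / (Σ_{y ∈ Q[x]} δ(y,x))`
is constant on each `Q`-class and has the same `ν`-integral as `f`. -/
theorem averaging_identity_quasiInvariant
    {T : Type*} [MeasurableSpace T] [StandardBorelSpace T]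
    {G : Type*} [Group G] [Countable G] [MulAction G T]
    (hact : ∀ g : G, Measurable fun x : T => g • x)
    (ν : Measure T) [IsFiniteMeasure ν]
    (δ : T → T → ℝ)
    (hδmeas : Measurable fun p : T × T => δ p.1 p.2)
    (hδpos : ∀ x y : T, 0 < δ x y)
    (hδone : ∀ x : T, δ x x = 1)
    (hδcocycle : ∀ x y z : T, y ∈ orbit G x → z ∈ orbit G x →
      δ x z = δ x y * δ y z)
    (hδRN : ∀ g : G, ∀ B : Set T, MeasurableSet B →
      ν ((fun x => g • x) '' B) = ∫⁻ x in B, ENNReal.ofReal (δ (g • x) x) ∂ν)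
    (Q : T → T → Prop)
    (hQequiv : Equivalence Q)
    (hQmeas : MeasurableSet {p : T × T | Q p.1 p.2})
    (hQsub : ∀ x y : T, Q x y → y ∈ orbit G x)
    (hQfin : ∀ x : T, {y | Q x y}.Finite)
    (f : T → ℝ≥0∞) (hf : Measurable f) :
    (∀ x y : T, Q x y →
      (∑ᶠ z ∈ {z | Q x z}, f z * ENNReal.ofReal (δ z x)) /
          (∑ᶠ z ∈ {z | Q x z}, ENNReal.ofReal (δ z x)) =
        (∑ᶠ z ∈ {z | Q y z}, f z * ENNReal.ofReal (δ z y)) /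
          (∑ᶠ z ∈ {z | Q y z}, ENNReal.ofReal (δ z y))) ∧
    ∫⁻ x, (∑ᶠ z ∈ {z | Q x z}, f z * ENNReal.ofReal (δ z x)) /
        (∑ᶠ z ∈ {z | Q x z}, ENNReal.ofReal (δ z x)) ∂ν = ∫⁻ x, f x ∂ν := by
  classical
  obtain ⟨e, he⟩ := Countable.exists_injective_nat G
  -- basic cocycle facts
  have hne0 : ∀ x y : T, ENNReal.ofReal (δ x y) ≠ 0 :=
    fun x y => (ENNReal.ofReal_pos.2 (hδpos x y)).ne'
  have hone : ∀ x y : T, Q x y → δ x y * δ y x = 1 := by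
    intro x y hxy
    have h := hδcocycle x y x (hQsub x y hxy) (mem_orbit_self x)
    rw [hδone x] at h
    exact h.symm
  have hinv : ∀ x y : T, Q x y → (ENNReal.ofReal (δ x y))⁻¹ = ENNReal.ofReal (δ y x) := by
    intro x y hxy
    have h1 : δ y x = (δ x y)⁻¹ := eq_inv_of_mul_eq_one_right (hone x y hxy)
    rw [h1, ENNReal.ofReal_inv_of_pos (hδpos x y)]
  -- the selection sets
  set B : G → Set T := fun g => {x | Q x (g • x) ∧ ∀ h : G, h • x = g • x → e g ≤ e h} with hBdef
  have hBmeas : ∀ g : G, MeasurableSet (B g) := by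
    intro g
    have h1 : MeasurableSet {x : T | Q x (g • x)} :=
      (measurable_id.prodMk (hact g)) hQmeas
    have h2 : ∀ h : G, MeasurableSet {x : T | h • x = g • x} := by
      intro h
      letI := upgradeStandardBorel T
      exact ((hact h).prodMk (hact g)) isClosed_diagonal.measurableSet
    have h3 : MeasurableSet {x : T | ∀ h : G, h • x = g • x → e g ≤ e h} := by
      have heq : {x : T | ∀ h : G, h • x = g • x → e g ≤ e h} =
          ⋂ h : G, {x | h • x = g • x → e g ≤ e h} := by
        ext x; simp
      rw [heq]
      refine MeasurableSet.iInter fun h => ?_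
      by_cases hle : e g ≤ e h
      · have : {x : T | h • x = g • x → e g ≤ e h} = univ := by ext x; simp [hle]
        rw [this]; exact MeasurableSet.univ
      · have : {x : T | h • x = g • x → e g ≤ e h} = {x | h • x = g • x}ᶜ := by
          ext x; simp [hle]
        rw [this]; exact (h2 h).compl
    exact h1.inter h3
  -- unique selection
  have hB : ∀ x y : T, Q x y → ∃! g : G, g • x = y ∧ x ∈ B g := by
    intro x y hxy
    obtain ⟨g₀, hg₀⟩ := mem_orbit_iff.mp (hQsub x y hxy)
    set S : Set ℕ := {n | ∃ h : G, e h = n ∧ h • x = y} with hSdef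
    have hSne : S.Nonempty := ⟨e g₀, g₀, rfl, hg₀⟩
    obtain ⟨g, hge, hgx⟩ := Nat.sInf_mem hSne
    have hming : ∀ h : G, h • x = g • x → e g ≤ e h := by
      intro h hh
      have hmem : e h ∈ S := ⟨h, rfl, by rw [hh, hgx]⟩
      rw [hge]
      exact Nat.sInf_le hmem
    refine ⟨g, ⟨hgx, ⟨by rw [hgx]; exact hxy, hming⟩⟩, ?_⟩
    rintro g' ⟨hg'x, _, hmin'⟩
    have h1 : e g' ≤ e g := hmin' g (by rw [hgx, hg'x])
    have h2 : e g ≤ e g' := hming g' (by rw [hg'x, hgx])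
    exact he (Nat.le_antisymm h1 h2)
  -- decomposition lemma 1
  have hdec : ∀ (K : T → T → ℝ≥0∞) (x : T),
      ∑ᶠ y ∈ {y | Q x y}, K x y = ∑' g : G, (B g).indicator (fun z => K z (g • z)) x := by
    intro K x
    have hfin := hQfin x
    set u : G → ℝ≥0∞ := fun g => (B g).indicator (fun z => K z (g • z)) x with hu
    set σ : T → G := fun y => if h : Q x y then (hB x y h).choose else 1 with hσdef
    have hσ : ∀ y (h : Q x y), σ y • x = y ∧ x ∈ B (σ y) := by
      intro y h
      simp only [hσdef, dif_pos h]
      exact (hB x y h).choose_spec.1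
    have hσu : ∀ y (h : Q x y), ∀ g : G, g • x = y ∧ x ∈ B g → g = σ y := by
      intro y h g hg
      simp only [hσdef, dif_pos h]
      exact (hB x y h).choose_spec.2 g hg
    set A : Finset G := hfin.toFinset.image σ with hA
    have h1 : ∑' g, u g = ∑ g ∈ A, u g := by
      apply tsum_eq_sum
      intro g hg
      by_contra h0
      have hxB : x ∈ B g := by
        by_contra hxB
        exact h0 (Set.indicator_of_notMem hxB _)
      have hQxg : Q x (g • x) := hxB.1
      have hgeq : g = σ (g • x) := hσu (g • x) hQxg g ⟨rfl, hxB⟩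
      exact hg (Finset.mem_image.mpr ⟨g • x, hfin.mem_toFinset.mpr hQxg, hgeq.symm⟩)
    have h2 : ∑ g ∈ A, u g = ∑ y ∈ hfin.toFinset, u (σ y) := by
      refine Finset.sum_image ?_
      intro y hy z hz hyz
      have hy' := (hσ y (hfin.mem_toFinset.mp hy)).1
      have hz' := (hσ z (hfin.mem_toFinset.mp hz)).1
      rw [← hy', ← hz', hyz]
    have h3 : ∀ y ∈ hfin.toFinset, u (σ y) = K x y := by
      intro y hy
      have h := hfin.mem_toFinset.mp hy
      obtain ⟨h1', h2'⟩ := hσ y h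
      simp only [hu]
      rw [Set.indicator_of_mem h2', h1']
    rw [finsum_mem_eq_finite_toFinset_sum _ hfin, h1, h2]
    exact (Finset.sum_congr rfl h3).symm
  -- decomposition lemma 2
  have hdec2 : ∀ (M : T → T → ℝ≥0∞) (x : T),
      ∑ᶠ y ∈ {y | Q x y}, M y x
        = ∑' g : G, (B g).indicator (fun z => M z (g • z)) (g⁻¹ • x) := by
    intro M x
    have hfin := hQfin x
    set u : G → ℝ≥0∞ := fun g => (B g).indicator (fun z => M z (g • z)) (g⁻¹ • x) with hu
    set σ : T → G := fun y => if h : Q y x then (hB y x h).choose else 1 with hσdef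
    have hσ : ∀ y (h : Q y x), σ y • y = x ∧ y ∈ B (σ y) := by
      intro y h
      simp only [hσdef, dif_pos h]
      exact (hB y x h).choose_spec.1
    have hσu : ∀ y (h : Q y x), ∀ g : G, g • y = x ∧ y ∈ B g → g = σ y := by
      intro y h g hg
      simp only [hσdef, dif_pos h]
      exact (hB y x h).choose_spec.2 g hg
    set A : Finset G := hfin.toFinset.image σ with hA
    have h1 : ∑' g, u g = ∑ g ∈ A, u g := by
      apply tsum_eq_sum
      intro g hg
      by_contra h0
      have hxB : g⁻¹ • x ∈ B g := by
        by_contra hxB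
        exact h0 (Set.indicator_of_notMem hxB _)
      have hQ1 : Q (g⁻¹ • x) (g • g⁻¹ • x) := hxB.1
      rw [smul_inv_smul] at hQ1
      have hgeq : g = σ (g⁻¹ • x) := hσu (g⁻¹ • x) hQ1 g ⟨smul_inv_smul g x, hxB⟩
      refine hg (Finset.mem_image.mpr ⟨g⁻¹ • x, hfin.mem_toFinset.mpr (hQequiv.symm hQ1), hgeq.symm⟩)
    have h2 : ∑ g ∈ A, u g = ∑ y ∈ hfin.toFinset, u (σ y) := by
      refine Finset.sum_image ?_
      intro y hy z hz hyz
      have hy' := (hσ y (hQequiv.symm (hfin.mem_toFinset.mp hy))).1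
      have hz' := (hσ z (hQequiv.symm (hfin.mem_toFinset.mp hz))).1
      have hy'' : y = (σ y)⁻¹ • x := by rw [← hy', inv_smul_smul]
      have hz'' : z = (σ z)⁻¹ • x := by rw [← hz', inv_smul_smul]
      rw [hy'', hz'', hyz]
    have h3 : ∀ y ∈ hfin.toFinset, u (σ y) = M y x := by
      intro y hy
      have h : Q y x := hQequiv.symm (hfin.mem_toFinset.mp hy)
      obtain ⟨h1', h2'⟩ := hσ y h
      have hy'' : (σ y)⁻¹ • x = y := by rw [← h1', inv_smul_smul]
      simp only [hu]
      rw [hy'', Set.indicator_of_mem h2', h1']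
    rw [finsum_mem_eq_finite_toFinset_sum _ hfin, h1, h2]
    exact (Finset.sum_congr rfl h3).symm
  -- change of variables
  have hCoV : ∀ (g : G) (φ : T → ℝ≥0∞), Measurable φ →
      ∫⁻ x, φ (g⁻¹ • x) ∂ν = ∫⁻ x, φ x * ENNReal.ofReal (δ (g • x) x) ∂ν := by
    intro g φ hφ
    have hdens : Measurable fun x : T => ENNReal.ofReal (δ (g • x) x) :=
      (hδmeas.comp ((hact g).prodMk measurable_id)).ennreal_ofReal
    have hmap : ν.map (fun x => g⁻¹ • x)
        = ν.withDensity (fun x => ENNReal.ofReal (δ (g • x) x)) := by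
      ext C hC
      rw [Measure.map_apply (hact g⁻¹) hC, withDensity_apply _ hC, ← hδRN g C hC]
      congr 1
      ext z
      simp only [Set.mem_preimage, Set.mem_image]
      constructor
      · intro h; exact ⟨g⁻¹ • z, h, smul_inv_smul g z⟩
      · rintro ⟨w, hw, rfl⟩; rwa [inv_smul_smul]
    calc ∫⁻ x, φ (g⁻¹ • x) ∂ν
        = ∫⁻ y, φ y ∂(ν.map fun x => g⁻¹ • x) := (lintegral_map hφ (hact g⁻¹)).symm
      _ = ∫⁻ x, (fun x => ENNReal.ofReal (δ (g • x) x)) x * φ x ∂ν := by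
          rw [hmap, lintegral_withDensity_eq_lintegral_mul _ hdens hφ]
          rfl
      _ = ∫⁻ x, φ x * ENNReal.ofReal (δ (g • x) x) ∂ν := by
          simp only [mul_comm]
  -- mass transport principle
  have hMTP : ∀ (K : T → T → ℝ≥0∞), Measurable (fun p : T × T => K p.1 p.2) →
      ∫⁻ x, ∑ᶠ y ∈ {y | Q x y}, K x y ∂ν
        = ∫⁻ x, ∑ᶠ y ∈ {y | Q x y}, K y x * ENNReal.ofReal (δ y x) ∂ν := by
    intro K hK
    set φ : G → T → ℝ≥0∞ := fun g =>
      (B g).indicator (fun z => K z (g • z) * ENNReal.ofReal (δ z (g • z))) with hφdef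
    have hφmeas : ∀ g, Measurable (φ g) := fun g =>
      Measurable.indicator ((hK.comp (measurable_id.prodMk (hact g))).mul
        ((hδmeas.comp (measurable_id.prodMk (hact g))).ennreal_ofReal)) (hBmeas g)
    have hψmeas : ∀ g : G, Measurable fun x => (B g).indicator (fun z => K z (g • z)) x :=
      fun g => Measurable.indicator (hK.comp (measurable_id.prodMk (hact g))) (hBmeas g)
    calc ∫⁻ x, ∑ᶠ y ∈ {y | Q x y}, K x y ∂ν
        = ∫⁻ x, ∑' g : G, (B g).indicator (fun z => K z (g • z)) x ∂ν :=
          lintegral_congr fun x => hdec K x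
      _ = ∑' g : G, ∫⁻ x, (B g).indicator (fun z => K z (g • z)) x ∂ν :=
          lintegral_tsum fun g => (hψmeas g).aemeasurable
      _ = ∑' g : G, ∫⁻ x, φ g (g⁻¹ • x) ∂ν := by
          refine tsum_congr fun g => ?_
          rw [hCoV g (φ g) (hφmeas g)]
          refine lintegral_congr fun x => ?_
          by_cases hx : x ∈ B g
          · simp only [hφdef, Set.indicator_of_mem hx]
            rw [mul_assoc, ← ENNReal.ofReal_mul (hδpos x (g • x)).le,
              ← hδcocycle x (g • x) x (mem_orbit x g) (mem_orbit_self x),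
              hδone, ENNReal.ofReal_one, mul_one]
          · simp only [hφdef, Set.indicator_of_notMem hx, zero_mul]
      _ = ∫⁻ x, ∑' g : G, φ g (g⁻¹ • x) ∂ν :=
          (lintegral_tsum fun g => ((hφmeas g).comp (hact g⁻¹)).aemeasurable).symm
      _ = ∫⁻ x, ∑ᶠ y ∈ {y | Q x y}, K y x * ENNReal.ofReal (δ y x) ∂ν :=
          lintegral_congr fun x =>
            (hdec2 (fun y w => K y w * ENNReal.ofReal (δ y w)) x).symm
  -- the denominator and numerator
  set Dn : T → ℝ≥0∞ := fun x => ∑ᶠ z ∈ {z | Q x z}, ENNReal.ofReal (δ z x) with hDn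
  set F : T → ℝ≥0∞ := fun x => ∑ᶠ z ∈ {z | Q x z}, f z * ENNReal.ofReal (δ z x) with hF
  have hfinset : ∀ x : T, Dn x = ∑ z ∈ (hQfin x).toFinset, ENNReal.ofReal (δ z x) :=
    fun x => finsum_mem_eq_finite_toFinset_sum _ (hQfin x)
  have hFfinset : ∀ x : T, F x = ∑ z ∈ (hQfin x).toFinset, f z * ENNReal.ofReal (δ z x) :=
    fun x => finsum_mem_eq_finite_toFinset_sum _ (hQfin x)
  have hDmeas : Measurable Dn := by
    have hEq : Dn = fun x => ∑' g : G,
        (B g).indicator (fun z => ENNReal.ofReal (δ (g • z) z)) x := by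
      funext x
      exact hdec (fun x y => ENNReal.ofReal (δ y x)) x
    rw [hEq]
    exact Measurable.ennreal_tsum fun g => Measurable.indicator
      ((hδmeas.comp ((hact g).prodMk measurable_id)).ennreal_ofReal) (hBmeas g)
  have hD0 : ∀ x : T, Dn x ≠ 0 := by
    intro x h
    rw [hfinset x] at h
    have hx : x ∈ (hQfin x).toFinset := (hQfin x).mem_toFinset.mpr (hQequiv.refl x)
    have := Finset.sum_eq_zero_iff.mp h x hx
    rw [hδone x, ENNReal.ofReal_one] at this
    exact one_ne_zero this
  have hDtop : ∀ x : T, Dn x ≠ ⊤ := by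
    intro x h
    rw [hfinset x] at h
    obtain ⟨a, _, ha⟩ := ENNReal.sum_eq_top.mp h
    exact ENNReal.ofReal_ne_top ha
  -- cocycle relation for terms
  have hterm : ∀ x y z : T, Q x y → Q x z →
      ENNReal.ofReal (δ z y) = ENNReal.ofReal (δ z x) * ENNReal.ofReal (δ x y) := by
    intro x y z hxy hxz
    have hx : x ∈ orbit G z := mem_orbit_symm.mp (hQsub x z hxz)
    have hy : y ∈ orbit G z := hQsub z y (hQequiv.trans (hQequiv.symm hxz) hxy)
    rw [← ENNReal.ofReal_mul (hδpos z x).le, ← hδcocycle z x y hx hy]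
  have hsetEq : ∀ x y : T, Q x y → {z | Q y z} = {z | Q x z} := by
    intro x y hxy
    ext z
    exact ⟨fun h => hQequiv.trans hxy h, fun h => hQequiv.trans (hQequiv.symm hxy) h⟩
  have hfinsetEq : ∀ x y : T, Q x y → (hQfin y).toFinset = (hQfin x).toFinset := by
    intro x y hxy
    ext z
    simp only [Set.Finite.mem_toFinset]
    exact ⟨fun h => hQequiv.trans hxy h, fun h => hQequiv.trans (hQequiv.symm hxy) h⟩
  have hDrel : ∀ x y : T, Q x y → Dn y = ENNReal.ofReal (δ x y) * Dn x := by
    intro x y hxy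
    rw [hfinset y, hfinset x, hfinsetEq x y hxy, mul_comm, Finset.sum_mul]
    refine Finset.sum_congr rfl fun z hz => ?_
    exact hterm x y z hxy ((hQfin x).mem_toFinset.mp hz)
  have hFrel : ∀ x y : T, Q x y → F y = ENNReal.ofReal (δ x y) * F x := by
    intro x y hxy
    rw [hFfinset y, hFfinset x, hfinsetEq x y hxy, mul_comm, Finset.sum_mul]
    refine Finset.sum_congr rfl fun z hz => ?_
    rw [hterm x y z hxy ((hQfin x).mem_toFinset.mp hz), mul_assoc]
  constructor
  · -- constancy on Q-classes
    intro x y hxy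
    show F x / Dn x = F y / Dn y
    rw [hFrel x y hxy, hDrel x y hxy,
      ENNReal.mul_div_mul_left _ _ (hne0 x y) ENNReal.ofReal_ne_top]
  · -- the integral identity
    set K : T → T → ℝ≥0∞ := fun x y => f y * ENNReal.ofReal (δ y x) * (Dn x)⁻¹ with hK
    have hKmeas : Measurable (fun p : T × T => K p.1 p.2) :=
      ((hf.comp measurable_snd).mul
        ((hδmeas.comp (measurable_snd.prodMk measurable_fst)).ennreal_ofReal)).mul
        ((hDmeas.comp measurable_fst).inv)
    have hpt1 : ∀ x : T, (∑ᶠ y ∈ {y | Q x y}, K x y) = F x / Dn x := by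
      intro x
      rw [finsum_mem_eq_finite_toFinset_sum _ (hQfin x)]
      simp only [hK]
      rw [← Finset.sum_mul, ← hFfinset x, div_eq_mul_inv]
    have hpt2 : ∀ x : T, (∑ᶠ y ∈ {y | Q x y}, K y x * ENNReal.ofReal (δ y x)) = f x := by
      intro x
      rw [finsum_mem_eq_finite_toFinset_sum _ (hQfin x)]
      have hstep : ∀ y ∈ (hQfin x).toFinset,
          K y x * ENNReal.ofReal (δ y x) = f x * (Dn x)⁻¹ * ENNReal.ofReal (δ y x) := by
        intro y hy
        have hxy : Q x y := (hQfin x).mem_toFinset.mp hy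
        have hDinv : (Dn y)⁻¹ = (ENNReal.ofReal (δ x y))⁻¹ * (Dn x)⁻¹ := by
          rw [hDrel x y hxy, ENNReal.mul_inv (Or.inl (hne0 x y)) (Or.inl ENNReal.ofReal_ne_top)]
        have hcancel : ENNReal.ofReal (δ x y) * (ENNReal.ofReal (δ x y))⁻¹ = 1 :=
          ENNReal.mul_inv_cancel (hne0 x y) ENNReal.ofReal_ne_top
        simp only [hK]
        rw [hDinv]
        calc f x * ENNReal.ofReal (δ x y) * ((ENNReal.ofReal (δ x y))⁻¹ * (Dn x)⁻¹)
              * ENNReal.ofReal (δ y x)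
            = ENNReal.ofReal (δ x y) * (ENNReal.ofReal (δ x y))⁻¹
              * (f x * (Dn x)⁻¹ * ENNReal.ofReal (δ y x)) := by ring
          _ = f x * (Dn x)⁻¹ * ENNReal.ofReal (δ y x) := by rw [hcancel, one_mul]
      rw [Finset.sum_congr rfl hstep, ← Finset.mul_sum, ← hfinset x, mul_assoc,
        ENNReal.inv_mul_cancel (hD0 x) (hDtop x), mul_one]
    calc ∫⁻ x, F x / Dn x ∂ν
        = ∫⁻ x, ∑ᶠ y ∈ {y | Q x y}, K x y ∂ν :=
          lintegral_congr fun x => (hpt1 x).symm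
      _ = ∫⁻ x, ∑ᶠ y ∈ {y | Q x y}, K y x * ENNReal.ofReal (δ y x) ∂ν := hMTP K hKmeas
      _ = ∫⁻ x, f x ∂ν := lintegral_congr fun x => hpt2 x
end

section
/- There exist two matrices A, B in SO(3) (the group of real 3×3 orthogonal matrices with determinant 1) such that the subgroup they generate is free of rank 2 (i.e., the homomorphism from the free group on two generators sending the generators to A and B is injective) and is dense in SO(3) (its topological closure is all of SO(3)). (This existence claim underlies the construction of the non-amenable suspension foliation in Proposition 3.5.) -/
/-!
Take for `A` and `B` the rotations by `θ = arccos (3/5)` about the `z`- and the `x`-axis. Then `5A`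
and `5B` are integral, so a nonempty reduced word `w` of length `n` in `A, B` gives an integer
matrix `5ⁿ w`, which is `≡ 0 (mod 5)` if `w = 1`. But modulo 5 each of `5A^{±1}, 5B^{±1}` has rank
one, and it maps the image line of every letter other than its inverse onto its own image line:
a ping-pong argument shows that `5ⁿ w ≢ 0 (mod 5)`, so `⟨A, B⟩` is free.

In particular `A` has infinite order, so `θ / 2π` is irrational and the closed subgroup `θℤ + 2πℤ`
of `ℝ` is everything: the closure of `⟨A, B⟩` contains all rotations about the `z`- and the
`x`-axis, and every element of `SO(3)` is a product of such rotations (Euler angles).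
-/

open Matrix Real Multiplicative
open scoped Pointwise

local notation "M₃" => Matrix (Fin 3) (Fin 3)

namespace FreeGroup

variable {ι M α : Type*} [Monoid M] [MulAction M α]

theorem IsReduced.prod_smul_getLast_subset (g : ι × Bool → M) (X : ι × Bool → Set α)
    (hX : ∀ l x : ι × Bool, (l.1 = x.1 → l.2 = x.2) → g l • X x ⊆ X l)
    {l : ι × Bool} {L : List (ι × Bool)} (h : IsReduced (l :: L)) :
    ((l :: L).map g).prod • X ((l :: L).getLast (List.cons_ne_nil l L)) ⊆ X l := by
  induction L generalizing l with
  | nil => simpa using hX l l fun _ => rfl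
  | cons x L ih =>
    rw [isReduced_cons_cons] at h
    rw [List.map_cons, List.prod_cons, mul_smul, List.getLast_cons (List.cons_ne_nil x L)]
    exact (Set.smul_set_mono (ih h.2)).trans (hX l x h.1)

end FreeGroup

namespace MonoidHom

variable {G : Type*} [Group G]

theorem irrational_div_of_not_isOfFinOrder (f : Multiplicative ℝ →* G) {a b : ℝ} (hb : b ≠ 0)
    (hfb : f (ofAdd b) = 1) (hfa : ¬IsOfFinOrder (f (ofAdd a))) : Irrational (a / b) := by
  rintro ⟨q, hq⟩
  have hrel : q.den • a = q.num • b := by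
    rw [eq_div_iff hb] at hq
    rw [nsmul_eq_mul, zsmul_eq_mul, ← hq, ← mul_assoc, mul_comm (q.den : ℝ), ← Rat.cast_natCast,
      ← Rat.cast_mul, Rat.mul_den_eq_num, Rat.cast_intCast]
  refine hfa (isOfFinOrder_iff_pow_eq_one.2 ⟨q.den, q.den_pos, ?_⟩)
  rw [← map_pow, ← ofAdd_nsmul, hrel, ofAdd_zsmul, map_zpow, hfb, _root_.one_zpow]

theorem range_le_of_irrational_div [TopologicalSpace G] (f : Multiplicative ℝ →* G)
    (hf : Continuous f) {H : Subgroup G} (hH : IsClosed (H : Set G)) {a b : ℝ}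
    (hab : Irrational (a / b)) (ha : f (ofAdd a) ∈ H) (hb : f (ofAdd b) ∈ H) : f.range ≤ H := by
  let K : AddSubgroup ℝ := Subgroup.toAddSubgroup' (H.comap f)
  have hK : IsClosed (K : Set ℝ) := hH.preimage (hf.comp continuous_ofAdd)
  have hdense : Dense (K : Set ℝ) :=
    (dense_addSubgroupClosure_pair_iff.2 hab).mono
      ((AddSubgroup.closure_le _).2 (Set.insert_subset ha (Set.singleton_subset_iff.2 hb)))
  rintro _ ⟨t, rfl⟩
  exact (hK.closure_eq.symm.trans hdense.closure_eq).ge (Set.mem_univ (toAdd t))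

end MonoidHom

namespace AddChar

variable {A M : Type*} [AddGroup A] [Monoid M]

theorem val_inv_toHomUnits (ψ : AddChar A M) (x : Multiplicative A) :
    (((ψ.toMonoidHom.toHomUnits x)⁻¹ : Mˣ) : M) = ψ (-toAdd x) := by
  rw [← map_inv, MonoidHom.coe_toHomUnits, toMonoidHom_apply, toAdd_inv]

theorem toHomUnits_mem_units (ψ : AddChar A M) {S : Submonoid M} (hS : ∀ a, ψ a ∈ S)
    (x : Multiplicative A) : ψ.toMonoidHom.toHomUnits x ∈ S.units :=
  (S.mem_units_iff _).2 ⟨hS _, by rw [val_inv_toHomUnits]; exact hS _⟩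

theorem continuous_toHomUnits [TopologicalSpace A] [ContinuousNeg A] [TopologicalSpace M]
    (ψ : AddChar A M) (hψ : Continuous ψ) : Continuous ψ.toMonoidHom.toHomUnits :=
  Units.continuous_iff.2 ⟨hψ.comp continuous_toAdd, by
    simp_rw [val_inv_toHomUnits]; exact hψ.comp continuous_toAdd.neg⟩

end AddChar

namespace Matrix

variable {n R : Type*} [Fintype n] [DecidableEq n] [CommRing R]

theorem mem_specialOrthogonalGroup_iff' {A : Matrix n n R} :
    A ∈ specialOrthogonalGroup n R ↔ Aᵀ * A = 1 ∧ A.det = 1 := by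
  rw [mem_specialOrthogonalGroup_iff, mem_orthogonalGroup_iff']

theorem coe_specialOrthogonalGroup :
    (specialOrthogonalGroup n R : Set (Matrix n n R)) = {A | Aᵀ * A = 1 ∧ A.det = 1} :=
  Set.ext fun _ => mem_specialOrthogonalGroup_iff'

theorem isClosed_specialOrthogonalGroup [TopologicalSpace R] [IsTopologicalRing R] [T2Space R] :
    IsClosed (specialOrthogonalGroup n R : Set (Matrix n n R)) := by
  rw [coe_specialOrthogonalGroup]
  exact (isClosed_eq (continuous_id.matrix_transpose.matrix_mul continuous_id)
    continuous_const).inter (isClosed_eq continuous_id.matrix_det continuous_const)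

end Matrix

theorem exists_mul_cos_eq_and_mul_sin_eq (p r : ℝ) :
    ∃ t, √(p ^ 2 + r ^ 2) * cos t = p ∧ √(p ^ 2 + r ^ 2) * sin t = r := by
  refine ⟨Complex.arg ⟨p, r⟩, ?_, ?_⟩
  · simpa [Complex.norm_eq_sqrt_sq_add_sq] using Complex.norm_mul_cos_arg ⟨p, r⟩
  · simpa [Complex.norm_eq_sqrt_sq_add_sq] using Complex.norm_mul_sin_arg ⟨p, r⟩

noncomputable def rotZ : AddChar ℝ (M₃ ℝ) where
  toFun t := !![cos t, -sin t, 0; sin t, cos t, 0; 0, 0, 1]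
  map_zero_eq_one' := by ext i j; fin_cases i <;> fin_cases j <;> simp
  map_add_eq_mul' s t := by
    ext i j
    fin_cases i <;> fin_cases j <;> simp [mul_apply, Fin.sum_univ_three, cos_add, sin_add] <;> ring

noncomputable def rotX : AddChar ℝ (M₃ ℝ) where
  toFun t := !![1, 0, 0; 0, cos t, -sin t; 0, sin t, cos t]
  map_zero_eq_one' := by ext i j; fin_cases i <;> fin_cases j <;> simp
  map_add_eq_mul' s t := by
    ext i j
    fin_cases i <;> fin_cases j <;> simp [mul_apply, Fin.sum_univ_three, cos_add, sin_add] <;> ring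

theorem rotZ_apply (t : ℝ) : rotZ t = !![cos t, -sin t, 0; sin t, cos t, 0; 0, 0, 1] := rfl

theorem rotX_apply (t : ℝ) : rotX t = !![1, 0, 0; 0, cos t, -sin t; 0, sin t, cos t] := rfl

theorem continuous_rotZ : Continuous rotZ := by
  refine continuous_matrix fun i j => ?_
  fin_cases i <;> fin_cases j <;> simp only [rotZ_apply] <;> fun_prop

theorem continuous_rotX : Continuous rotX := by
  refine continuous_matrix fun i j => ?_
  fin_cases i <;> fin_cases j <;> simp only [rotX_apply] <;> fun_prop

theorem rotZ_two_pi : rotZ (2 * π) = 1 := by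
  ext i j; fin_cases i <;> fin_cases j <;> simp [rotZ_apply]

theorem rotX_two_pi : rotX (2 * π) = 1 := by
  ext i j; fin_cases i <;> fin_cases j <;> simp [rotX_apply]

theorem rotZ_mem_specialOrthogonalGroup (t : ℝ) : rotZ t ∈ specialOrthogonalGroup (Fin 3) ℝ := by
  refine mem_specialOrthogonalGroup_iff'.2 ⟨?_, ?_⟩
  · ext i j
    fin_cases i <;> fin_cases j <;> simp [rotZ_apply, mul_apply, Fin.sum_univ_three] <;>
      linarith [sin_sq_add_cos_sq t]
  · simp [rotZ_apply, det_fin_three]; linarith [sin_sq_add_cos_sq t]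

theorem rotX_mem_specialOrthogonalGroup (t : ℝ) : rotX t ∈ specialOrthogonalGroup (Fin 3) ℝ := by
  refine mem_specialOrthogonalGroup_iff'.2 ⟨?_, ?_⟩
  · ext i j
    fin_cases i <;> fin_cases j <;> simp [rotX_apply, mul_apply, Fin.sum_univ_three] <;>
      linarith [sin_sq_add_cos_sq t]
  · simp [rotX_apply, det_fin_three]; linarith [sin_sq_add_cos_sq t]

theorem exists_rotZ_mul_rotX_mulVec_eq {v : Fin 3 → ℝ} (hv : v 0 ^ 2 + v 1 ^ 2 + v 2 ^ 2 = 1) :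
    ∃ a b, (rotZ a * rotX b) *ᵥ Pi.single 2 1 = v := by
  -- spherical coordinates: this vector is `(sin a * sin b, -cos a * sin b, cos b)`
  obtain ⟨a, ha₁, ha₂⟩ := exists_mul_cos_eq_and_mul_sin_eq (-v 1) (v 0)
  set s := √((-v 1) ^ 2 + v 0 ^ 2)
  obtain ⟨b, hb₁, hb₂⟩ := exists_mul_cos_eq_and_mul_sin_eq (v 2) s
  have hunit : √(v 2 ^ 2 + s ^ 2) = 1 := by
    rw [Real.sq_sqrt (by positivity), ← Real.sqrt_one]; congr 1; linarith
  rw [hunit, one_mul] at hb₁ hb₂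
  refine ⟨a, b, funext fun i => ?_⟩
  fin_cases i <;>
    simp [rotZ_apply, rotX_apply, mulVec, dotProduct, Fin.sum_univ_three, hb₁, hb₂]
  · linear_combination ha₂
  · linear_combination -ha₁

theorem eq_rotZ_of_mulVec_eq {N : M₃ ℝ} (hN : N ∈ specialOrthogonalGroup (Fin 3) ℝ)
    (hfix : N *ᵥ Pi.single 2 1 = Pi.single 2 1) : ∃ c, N = rotZ c := by
  obtain ⟨horth, hdet⟩ := mem_specialOrthogonalGroup_iff'.1 hN
  have hcol (i : Fin 3) : N i 2 = (Pi.single 2 1 : Fin 3 → ℝ) i := by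
    simpa [mulVec_single_one] using congrFun hfix i
  have hrow (j : Fin 3) : N 2 j = (Pi.single 2 1 : Fin 3 → ℝ) j := by
    have hfixT : Nᵀ *ᵥ Pi.single 2 1 = Pi.single 2 1 := by
      nth_rw 1 [← hfix]
      rw [mulVec_mulVec, horth, one_mulVec]
    simpa [mulVec_single_one] using congrFun hfixT j
  have h00 := congrFun (congrFun horth 0) 0
  have h01 := congrFun (congrFun horth 0) 1
  simp [mul_apply, Fin.sum_univ_three, hrow] at h00 h01
  simp [det_fin_three, hcol, hrow] at hdet
  obtain ⟨c, hc₁, hc₂⟩ := exists_mul_cos_eq_and_mul_sin_eq (N 0 0) (N 1 0)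
  rw [show N 0 0 ^ 2 + N 1 0 ^ 2 = 1 by linear_combination h00, Real.sqrt_one, one_mul]
    at hc₁ hc₂
  refine ⟨c, ?_⟩
  ext i j
  fin_cases i <;> fin_cases j <;> simp [rotZ_apply, hcol, hrow, hc₁, hc₂]
  · linear_combination N 0 0 * h01 - N 1 0 * hdet - N 0 1 * h00
  · linear_combination N 0 0 * hdet + N 1 0 * h01 - N 1 1 * h00

theorem exists_eq_rotZ_mul_rotX_mul_rotZ {M : M₃ ℝ}
    (hM : M ∈ specialOrthogonalGroup (Fin 3) ℝ) :
    ∃ a b c, M = rotZ a * rotX b * rotZ c := by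
  have hunit : (M *ᵥ Pi.single 2 1) 0 ^ 2 + (M *ᵥ Pi.single 2 1) 1 ^ 2
      + (M *ᵥ Pi.single 2 1) 2 ^ 2 = 1 := by
    have h22 := congrFun (congrFun (mem_specialOrthogonalGroup_iff'.1 hM).1 2) 2
    simp [mul_apply, Fin.sum_univ_three] at h22
    simpa [mulVec_single_one, sq] using h22
  obtain ⟨a, b, hab⟩ := exists_rotZ_mul_rotX_mulVec_eq hunit
  have hcancel (ψ : AddChar ℝ (M₃ ℝ)) {s t : ℝ} (hst : s + t = 0) : ψ s * ψ t = 1 := by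
    rw [← AddChar.map_add_eq_mul, hst, AddChar.map_zero_eq_one]
  obtain ⟨c, hc⟩ := eq_rotZ_of_mulVec_eq (N := rotX (-b) * rotZ (-a) * M)
    (mul_mem (mul_mem (rotX_mem_specialOrthogonalGroup _) (rotZ_mem_specialOrthogonalGroup _))
      hM)
    (by rw [← mulVec_mulVec, ← hab, mulVec_mulVec, mul_assoc, ← mul_assoc (rotZ (-a)),
      hcancel rotZ (neg_add_cancel a), one_mul, hcancel rotX (neg_add_cancel b), one_mulVec])
  refine ⟨a, b, c, ?_⟩
  rw [← hc, mul_assoc, ← mul_assoc (rotX b), ← mul_assoc (rotX b),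
    hcancel rotX (add_neg_cancel b), one_mul, ← mul_assoc, hcancel rotZ (add_neg_cancel a), one_mul]

noncomputable def genZ : (M₃ ℝ)ˣ := rotZ.toMonoidHom.toHomUnits (ofAdd (arccos (3 / 5)))

noncomputable def genX : (M₃ ℝ)ˣ := rotX.toMonoidHom.toHomUnits (ofAdd (arccos (3 / 5)))

/-- Five times the matrix of the letter `(b, s)` of `FreeGroup.toWord`, i.e. of `genZ ^ (±1)`
(`b = true`) or `genX ^ (±1)` (`b = false`), the sign being given by `s`. -/
def scaledLetter : Bool × Bool → M₃ ℤ
  | (true, true) => !![3, -4, 0; 4, 3, 0; 0, 0, 5]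
  | (true, false) => !![3, 4, 0; -4, 3, 0; 0, 0, 5]
  | (false, true) => !![5, 0, 0; 0, 3, -4; 0, 4, 3]
  | (false, false) => !![5, 0, 0; 0, 3, 4; 0, -4, 3]

theorem smul_val_letter (l : Bool × Bool) :
    (5 : ℝ) • ((bif l.2 then (if l.1 then genZ else genX) else (if l.1 then genZ else genX)⁻¹ :
      (M₃ ℝ)ˣ) : M₃ ℝ) = (Int.castRingHom ℝ).mapMatrix (scaledLetter l) := by
  have hcos : cos (arccos (3 / 5)) = 3 / 5 := cos_arccos (by norm_num) (by norm_num)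
  have hsin : sin (arccos (3 / 5)) = 4 / 5 := by
    rw [sin_arccos, show (1 : ℝ) - (3 / 5) ^ 2 = (4 / 5) ^ 2 by norm_num, sqrt_sq (by norm_num)]
  rcases l with ⟨_ | _, _ | _⟩ <;>
    ext i j <;> fin_cases i <;> fin_cases j <;>
    simp [genZ, genX, AddChar.val_inv_toHomUnits, rotZ_apply, rotX_apply, scaledLetter, hcos,
      hsin] <;> norm_num

theorem smul_lift_mk (L : List (Bool × Bool)) :
    (5 : ℝ) ^ L.length • ((FreeGroup.lift (fun b : Bool => if b then genZ else genX)
      (FreeGroup.mk L) : (M₃ ℝ)ˣ) : M₃ ℝ) =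
      (Int.castRingHom ℝ).mapMatrix (L.map scaledLetter).prod := by
  rw [FreeGroup.lift_mk]
  induction L with
  | nil => simp
  | cons l L ih =>
    rw [List.map_cons, List.prod_cons, Units.val_mul, List.length_cons, pow_succ',
      ← smul_mul_smul, smul_val_letter, ih, List.map_cons, List.prod_cons, map_mul]

theorem prod_scaledLetter_eq_of_lift_mk_eq_one {L : List (Bool × Bool)}
    (h : FreeGroup.lift (fun b : Bool => if b then genZ else genX) (FreeGroup.mk L) = 1) :
    (L.map scaledLetter).prod = 5 ^ L.length := by
  apply Matrix.map_injective (f := (Int.cast : ℤ → ℝ)) Int.cast_injective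
  change (Int.castRingHom ℝ).mapMatrix _ = (Int.castRingHom ℝ).mapMatrix _
  rw [← smul_lift_mk, h, Units.val_one, map_pow, map_ofNat, Algebra.smul_def, mul_one, map_pow,
    map_ofNat]

/-- Modulo 5, `scaledLetter l` has rank one and `ray l` spans its image. -/
def ray : Bool × Bool → Fin 3 → ZMod 5
  | (true, true) => ![1, 3, 0]
  | (true, false) => ![1, 2, 0]
  | (false, true) => ![0, 1, 3]
  | (false, false) => ![0, 1, 2]

theorem ray_ne_zero : ∀ l, ray l ≠ 0 := by decide

theorem exists_scaledLetter_mulVec_ray : ∀ l x : Bool × Bool, (l.1 = x.1 → l.2 = x.2) →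
    ∃ c : ZMod 5, c ≠ 0 ∧
      (Int.castRingHom (ZMod 5)).mapMatrix (scaledLetter l) *ᵥ ray x = c • ray l := by
  decide

theorem mapMatrix_prod_scaledLetter_ne_zero {l : Bool × Bool} {L : List (Bool × Bool)}
    (h : FreeGroup.IsReduced (l :: L)) :
    (Int.castRingHom (ZMod 5)).mapMatrix ((l :: L).map scaledLetter).prod ≠ 0 := by
  have : Fact (Nat.Prime 5) := ⟨Nat.prime_five⟩
  intro hzero
  let g := (toLinAlgEquiv' : M₃ (ZMod 5) ≃ₐ[ZMod 5] _) ∘ (Int.castRingHom (ZMod 5)).mapMatrix ∘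
    scaledLetter
  have hprod : ((l :: L).map g).prod = 0 := by
    rw [← List.map_map, ← map_list_prod, ← List.map_map, ← map_list_prod, hzero, map_zero]
  have hpingpong := h.prod_smul_getLast_subset g
    (fun x => {v | ∃ c : ZMod 5, c ≠ 0 ∧ v = c • ray x}) ?_
    (Set.smul_mem_smul_set ⟨1, one_ne_zero, (one_smul _ _).symm⟩)
  · obtain ⟨c, hc, hc₀⟩ := hpingpong
    rw [hprod, zero_smul, eq_comm, smul_eq_zero] at hc₀
    exact hc₀.elim hc (ray_ne_zero l)
  · rintro y x hyx _ ⟨_, ⟨c, hc, rfl⟩, rfl⟩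
    obtain ⟨d, hd, hyx⟩ := exists_scaledLetter_mulVec_ray y x hyx
    refine ⟨c * d, mul_ne_zero hc hd, ?_⟩
    change g y (c • ray x) = _
    simp only [g, Function.comp_apply, map_smul, toLinAlgEquiv'_apply, hyx, smul_smul]

theorem injective_lift_genZ_genX :
    Function.Injective (FreeGroup.lift fun b : Bool => if b then genZ else genX) := by
  rw [injective_iff_map_eq_one]
  intro w hw
  by_contra hw₁
  obtain ⟨l, L, hL⟩ := List.exists_cons_of_ne_nil (mt FreeGroup.toWord_eq_nil_iff.1 hw₁)
  apply mapMatrix_prod_scaledLetter_ne_zero (hL ▸ FreeGroup.isReduced_toWord)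
  rw [← hL, prod_scaledLetter_eq_of_lift_mk_eq_one (by rwa [FreeGroup.mk_toWord]), map_pow,
    map_ofNat, show (5 : M₃ (ZMod 5)) = 0 by decide, hL, List.length_cons, pow_succ, mul_zero]

theorem irrational_arccos_three_fifths_div_two_pi : Irrational (arccos (3 / 5) / (2 * π)) := by
  refine rotZ.toMonoidHom.toHomUnits.irrational_div_of_not_isOfFinOrder (by positivity)
    (Units.ext rotZ_two_pi) ?_
  change ¬IsOfFinOrder genZ
  simpa using (injective_lift_genZ_genX.isOfFinOrder_iff (x := FreeGroup.of true)).not.2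
    (not_isOfFinOrder_of_isMulTorsionFree (FreeGroup.of_ne_one true))

theorem range_toHomUnits_le_topologicalClosure {ψ : AddChar ℝ (M₃ ℝ)} (hψ : Continuous ψ)
    (h2π : ψ (2 * π) = 1)
    (hgen : ψ.toMonoidHom.toHomUnits (ofAdd (arccos (3 / 5))) ∈ Subgroup.closure {genZ, genX}) :
    ψ.toMonoidHom.toHomUnits.range ≤ (Subgroup.closure {genZ, genX}).topologicalClosure :=
  MonoidHom.range_le_of_irrational_div _ (ψ.continuous_toHomUnits hψ)
    (Subgroup.isClosed_topologicalClosure _) irrational_arccos_three_fifths_div_two_pi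
    (Subgroup.le_topologicalClosure _ hgen) (by
      rw [show ψ.toMonoidHom.toHomUnits (ofAdd (2 * π)) = 1 from Units.ext h2π]; exact one_mem _)

theorem specialOrthogonalGroup_subset_image_topologicalClosure :
    (specialOrthogonalGroup (Fin 3) ℝ : Set (M₃ ℝ)) ⊆
      Units.val '' (Subgroup.closure {genZ, genX}).topologicalClosure := by
  have hZ := range_toHomUnits_le_topologicalClosure continuous_rotZ rotZ_two_pi
    (Subgroup.subset_closure (by simp [genZ]))
  have hX := range_toHomUnits_le_topologicalClosure continuous_rotX rotX_two_pi
    (Subgroup.subset_closure (by simp [genX]))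
  intro M hM
  obtain ⟨a, b, c, rfl⟩ := exists_eq_rotZ_mul_rotX_mul_rotZ hM
  exact ⟨_, mul_mem (mul_mem (hZ ⟨ofAdd a, rfl⟩) (hX ⟨ofAdd b, rfl⟩)) (hZ ⟨ofAdd c, rfl⟩), rfl⟩

theorem closure_le_units_specialOrthogonalGroup :
    Subgroup.closure {genZ, genX} ≤ (specialOrthogonalGroup (Fin 3) ℝ).units :=
  (Subgroup.closure_le _).2 <| Set.insert_subset
    (rotZ.toHomUnits_mem_units rotZ_mem_specialOrthogonalGroup _)
    (Set.singleton_subset_iff.2 (rotX.toHomUnits_mem_units rotX_mem_specialOrthogonalGroup _))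

/-- **Existence of a dense free subgroup of rank 2 in SO(3)** (used in Proposition 3.5).
There exist two invertible real 3×3 matrices `A`, `B` that are special orthogonal
(`Mᵀ·M = 1`, `det M = 1`) such that the homomorphism from the free group on two
generators sending the generators to `A` and `B` is injective (the subgroup they
generate is free of rank 2), and the subgroup of matrices they generate is dense in
`SO(3) = {M : Mᵀ·M = 1, det M = 1}`. -/
theorem exists_dense_free_subgroup_SO3 :
    ∃ A B : (Matrix (Fin 3) (Fin 3) ℝ)ˣ,
      (A : Matrix (Fin 3) (Fin 3) ℝ)ᵀ * (A : Matrix (Fin 3) (Fin 3) ℝ) = 1 ∧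
      (A : Matrix (Fin 3) (Fin 3) ℝ).det = 1 ∧
      (B : Matrix (Fin 3) (Fin 3) ℝ)ᵀ * (B : Matrix (Fin 3) (Fin 3) ℝ) = 1 ∧
      (B : Matrix (Fin 3) (Fin 3) ℝ).det = 1 ∧
      Function.Injective
        (FreeGroup.lift (fun b : Bool => if b then A else B) :
          FreeGroup Bool →* (Matrix (Fin 3) (Fin 3) ℝ)ˣ) ∧
      closure ((fun M : (Matrix (Fin 3) (Fin 3) ℝ)ˣ => (M : Matrix (Fin 3) (Fin 3) ℝ)) ''
          (Subgroup.closure {A, B} : Set (Matrix (Fin 3) (Fin 3) ℝ)ˣ)) =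
        {M : Matrix (Fin 3) (Fin 3) ℝ | Mᵀ * M = 1 ∧ M.det = 1} := by
  obtain ⟨hZ₁, hZ₂⟩ := mem_specialOrthogonalGroup_iff'.1 (rotZ_mem_specialOrthogonalGroup _)
  obtain ⟨hX₁, hX₂⟩ := mem_specialOrthogonalGroup_iff'.1 (rotX_mem_specialOrthogonalGroup _)
  refine ⟨genZ, genX, hZ₁, hZ₂, hX₁, hX₂, injective_lift_genZ_genX, ?_⟩
  rw [← coe_specialOrthogonalGroup]
  refine (closure_minimal ?_ isClosed_specialOrthogonalGroup).antisymm
    (specialOrthogonalGroup_subset_image_topologicalClosure.trans ?_)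
  · rintro _ ⟨u, hu, rfl⟩
    exact (closure_le_units_specialOrthogonalGroup hu).1
  · rw [Subgroup.topologicalClosure_coe]
    exact image_closure_subset_closure_image Units.continuous_val
end
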